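/- Let Ω ⊂ ℝ² be an open set, let 1 < p < ∞, let w ≥ 0 be locally integrable on ℝ², and let f be a measurable function on Ω. Then ∫_Ω (M_Ω f(x))^p w(x) dx ≤ C(p) ∫_Ω |f(x)|^p Mw(x) dx, where C(p) depends only on p, M_Ω f(x) = sup { (1/|D|) ∫_D |f| : D an open disc with x ∈ D ⊂ Ω } is the local Hardy–Littlewood maximal function, and Mw(x) = sup { (1/|D|) ∫_D w : D an open disc with x ∈ D } is the Hardy–Littlewood maximal function of w. -/

import Mathlib

/-!
Weak type first: if `M_Ω f > s` on a compact set `K`, cover `K` by discs `B ⊆ Ω` on which the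
average of `|f|` exceeds `s`, and extract by Vitali a disjoint subfamily whose fivefold
enlargements still cover `K`. On each such disc the part of `f` where `2|f| ≤ s` carries at most
half of the mass `s |B|`, so `s |B| ≤ 2 ∫_{B ∩ {2|f| > s}} |f|`, while `w(5B) ≤ 25 |B| Mw(y)` for
every `y ∈ B`. Summing over the disjoint discs, `s · w{M_Ω f > s} ≤ 50 ∫_{Ω ∩ {2|f| > s}} |f| Mw`.
The strong bound follows from the layer cake formula, applied once to `(M_Ω f)^p` against
`w dx` and once to `(2|f|)^(p-1)` against `|f| Mw dx` on `Ω`; this gives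
`C(p) = 50 · 2^(p-1) · p / (p - 1)`.
-/

open MeasureTheory Complex Metric Set Filter
open scoped ENNReal NNReal ContDiff

noncomputable section

def maximalOn (Ω : Set ℂ) (f : ℂ → ℝ) (x : ℂ) : ℝ≥0∞ :=
  ⨆ (c : ℂ) (r : ℝ) (_ : 0 < r) (_ : x ∈ Metric.ball c r) (_ : Metric.ball c r ⊆ Ω),
    (∫⁻ y in Metric.ball c r, (‖f y‖₊ : ℝ≥0∞)) / volume (Metric.ball c r)

end

theorem IsCompact.exists_finset_pairwiseDisjoint_ball_subset_five_mul {X ι : Type*}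
    [PseudoMetricSpace X] {K : Set X} (hK : IsCompact K) (c : ι → X) (r : ι → ℝ)
    (hr : ∀ i, 0 < r i) (hcover : K ⊆ ⋃ i, ball (c i) (r i)) :
    ∃ t : Finset ι, (t : Set ι).PairwiseDisjoint (fun i => ball (c i) (r i)) ∧
      K ⊆ ⋃ i ∈ t, ball (c i) (5 * r i) := by
  obtain ⟨T, hT⟩ := hK.elim_finite_subcover _ (fun i => isOpen_ball) hcover
  obtain ⟨u, huT, hdisj, hcov⟩ := Vitali.exists_disjoint_subfamily_covering_enlargement_closedBall
    (T : Set ι) c r (∑ i ∈ T, r i)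
    (fun i hi => Finset.single_le_sum (fun j _ => (hr j).le) hi) 4 (by norm_num)
  have hu : u.Finite := T.finite_toSet.subset huT
  refine ⟨hu.toFinset, ?_, fun x hx => ?_⟩
  · rw [hu.coe_toFinset]
    exact hdisj.mono fun i => ball_subset_closedBall
  · obtain ⟨a, haT, hxa⟩ := mem_iUnion₂.1 (hT hx)
    obtain ⟨b, hbu, hab⟩ := hcov a haT
    exact mem_biUnion (hu.mem_toFinset.2 hbu) <| closedBall_subset_ball
      (by linarith [hr b]) (hab (ball_subset_closedBall hxa))

section WeakToStrong

variable {α : Type*} [MeasurableSpace α]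

theorem MeasureTheory.LocallyIntegrable.isLocallyFiniteMeasure_withDensity_ofReal
    [TopologicalSpace α] {μ : Measure α} [SFinite μ] {w : α → ℝ} (hw : LocallyIntegrable w μ) :
    IsLocallyFiniteMeasure (μ.withDensity fun x => ENNReal.ofReal (w x)) where
  finiteAtNhds x :=
    let ⟨U, hU, hint⟩ := hw x
    ⟨U, hU, (withDensity_apply' _ U).trans_lt <|
      (lintegral_mono fun y => Real.ofReal_le_enorm (w y)).trans_lt hint.2⟩

theorem half_mul_le_setLIntegral_inter_lt_two_mul {μ : Measure α} {g : α → ℝ≥0∞}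
    (hg : Measurable g) {B : Set α} {s : ℝ≥0∞} (hs : s ≠ ⊤) (hB : μ B ≠ ⊤)
    (h : s * μ B ≤ ∫⁻ x in B, g x ∂μ) :
    s / 2 * μ B ≤ ∫⁻ x in B ∩ {x | s < 2 * g x}, g x ∂μ := by
  set F := {x | s < 2 * g x}
  have hF : MeasurableSet F := measurableSet_lt measurable_const (hg.const_mul 2)
  have hpt : ∀ x, g x ≤ F.indicator g x + s / 2 := fun x => by
    by_cases hx : x ∈ F
    · exact (indicator_of_mem hx g).symm ▸ le_self_add
    · rw [indicator_of_notMem hx, zero_add, ENNReal.le_div_iff_mul_le (by simp) (by simp),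
        mul_comm]
      exact not_lt.1 hx
  have hhalf : s / 2 * μ B ≠ ⊤ := ENNReal.mul_ne_top (ENNReal.div_ne_top hs two_ne_zero) hB
  refine (ENNReal.add_le_add_iff_right hhalf).1 ?_
  calc s / 2 * μ B + s / 2 * μ B = s * μ B := by rw [← add_mul, ENNReal.add_halves]
    _ ≤ ∫⁻ x in B, g x ∂μ := h
    _ ≤ ∫⁻ x in B, (F.indicator g x + s / 2) ∂μ := lintegral_mono hpt
    _ = ∫⁻ x in B ∩ F, g x ∂μ + s / 2 * μ B := by
      rw [lintegral_add_right _ measurable_const, lintegral_indicator hF,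
        Measure.restrict_restrict hF, inter_comm, setLIntegral_const]

theorem measure_eq_zero_of_forall_nat_mul_le {μ : Measure α} {S : Set α} {K : ℝ≥0∞}
    (hK : K ≠ ⊤) (h : ∀ n : ℕ, (n : ℝ≥0∞) * μ S ≤ K) : μ S = 0 := by
  by_contra hS
  obtain ⟨n, hn⟩ := ENNReal.exists_nat_gt (ENNReal.div_ne_top hK hS)
  exact (h n).not_gt ((ENNReal.div_lt_iff (Or.inl hS) (Or.inr hK)).1 hn)

theorem lintegral_ofReal_two_mul_norm_rpow_withDensity {E : Type*} [NormedAddCommGroup E]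
    [MeasurableSpace E] [OpensMeasurableSpace E] {μ : Measure α} {f : α → E} {W : α → ℝ≥0∞}
    (hf : Measurable f) (hW : Measurable W) {p : ℝ} (hp : 0 < p) :
    ∫⁻ x, ENNReal.ofReal ((2 * ‖f x‖) ^ (p - 1)) ∂μ.withDensity (fun x => ‖f x‖ₑ * W x) =
      ENNReal.ofReal (2 ^ (p - 1)) * ∫⁻ x, ‖f x‖ₑ ^ p * W x ∂μ := by
  have hpt : ∀ r : ℝ, 0 ≤ r → r * (2 * r) ^ (p - 1) = 2 ^ (p - 1) * r ^ p := fun r hr => by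
    rw [Real.mul_rpow zero_le_two hr, mul_left_comm, ← Real.rpow_one_add' hr (by linarith)]
    ring_nf
  rw [lintegral_withDensity_eq_lintegral_mul _ (by fun_prop : Measurable fun x => ‖f x‖ₑ * W x)
    (hf.norm.const_mul 2 |>.pow_const _ |>.ennreal_ofReal),
    ← lintegral_const_mul' _ _ ENNReal.ofReal_ne_top]
  refine lintegral_congr fun x => ?_
  simp only [Pi.mul_apply]
  rw [← ofReal_norm, ENNReal.ofReal_rpow_of_nonneg (norm_nonneg _) hp.le, mul_right_comm,
    ← ENNReal.ofReal_mul (norm_nonneg _), hpt _ (norm_nonneg _),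
    ENNReal.ofReal_mul (by positivity), mul_assoc]

variable {μ ν : Measure α} {M : α → ℝ≥0∞} {g : α → ℝ} {C : ℝ≥0∞} {p : ℝ}

theorem ae_lt_top_of_mul_meas_lt_le (hp : 1 < p) (hg : AEMeasurable g ν) (hC : C ≠ ⊤)
    (hweak : ∀ t : ℝ, 0 < t →
      ENNReal.ofReal t * μ {x | ENNReal.ofReal t < M x} ≤ C * ν {x | t < g x})
    (hI : ∫⁻ x, ENNReal.ofReal (g x ^ (p - 1)) ∂ν ≠ ⊤) :
    ∀ᵐ x ∂μ, M x < ⊤ := by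
  have hν : ν {x | 1 < g x} ≤ ∫⁻ x, ENNReal.ofReal (g x ^ (p - 1)) ∂ν := by
    refine (measure_mono fun x (hx : 1 < g x) => ?_).trans (one_mul (ν _) ▸
      mul_meas_ge_le_lintegral₀ (hg.pow_const _).ennreal_ofReal 1)
    exact ENNReal.one_le_ofReal.2 (Real.one_le_rpow hx.le (by linarith))
  refine ae_iff.2 (measure_eq_zero_of_forall_nat_mul_le
    (ENNReal.mul_ne_top hC hI) fun n => ?_)
  rcases Nat.eq_zero_or_pos n with rfl | hn
  · simp
  have hn' : (0 : ℝ) < n := Nat.cast_pos.2 hn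
  calc (n : ℝ≥0∞) * μ {x | ¬M x < ⊤}
      ≤ ENNReal.ofReal n * μ {x | ENNReal.ofReal n < M x} := by
        rw [ENNReal.ofReal_natCast]
        gcongr
        exact fun hx => top_le_iff.1 (not_lt.1 hx) ▸ ENNReal.natCast_lt_top n
    _ ≤ C * ν {x | (n : ℝ) < g x} := hweak n hn'
    _ ≤ C * ∫⁻ x, ENNReal.ofReal (g x ^ (p - 1)) ∂ν := by
        gcongr
        refine le_trans (measure_mono fun x (hx : (n : ℝ) < g x) => ?_) hν
        exact lt_of_le_of_lt (by exact_mod_cast hn) hx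

theorem lintegral_rpow_le_of_mul_meas_lt_le (hp : 1 < p) (hM : AEMeasurable M μ)
    (hM_fin : ∀ᵐ x ∂μ, M x < ⊤) (hg_nn : 0 ≤ᵐ[ν] g) (hg : AEMeasurable g ν) (hC : C ≠ ⊤)
    (hweak : ∀ t : ℝ, 0 < t →
      ENNReal.ofReal t * μ {x | ENNReal.ofReal t < M x} ≤ C * ν {x | t < g x}) :
    ∫⁻ x, M x ^ p ∂μ ≤
      C * ENNReal.ofReal (p / (p - 1)) * ∫⁻ x, ENNReal.ofReal (g x ^ (p - 1)) ∂ν := by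
  have hp0 : 0 < p := by linarith
  have hp1 : 0 < p - 1 := by linarith
  have hM_eq : ∫⁻ x, M x ^ p ∂μ = ∫⁻ x, ENNReal.ofReal ((M x).toReal ^ p) ∂μ := by
    refine lintegral_congr_ae (hM_fin.mono fun x hx => ?_)
    dsimp only
    rw [← ENNReal.ofReal_rpow_of_nonneg ENNReal.toReal_nonneg hp0.le,
      ENNReal.ofReal_toReal hx.ne]
  have htail : ∀ t ∈ Ioi (0 : ℝ), μ {x | t < (M x).toReal} * ENNReal.ofReal (t ^ (p - 1)) ≤
      C * (ν {x | t < g x} * ENNReal.ofReal (t ^ (p - 1 - 1))) := fun t (ht : 0 < t) => by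
    have hpow : t ^ (p - 1) = t * t ^ (p - 1 - 1) := by
      rw [← Real.rpow_one_add' ht.le (by linarith)]
      ring_nf
    calc μ {x | t < (M x).toReal} * ENNReal.ofReal (t ^ (p - 1))
        ≤ ENNReal.ofReal t * μ {x | ENNReal.ofReal t < M x} *
            ENNReal.ofReal (t ^ (p - 1 - 1)) := by
          rw [hpow, ENNReal.ofReal_mul ht.le, mul_left_comm, ← mul_assoc]
          gcongr with x
          exact fun hx => ((ENNReal.ofReal_lt_ofReal_iff (ht.trans hx)).2 hx).trans_le
            ENNReal.ofReal_toReal_le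
      _ ≤ C * (ν {x | t < g x} * ENNReal.ofReal (t ^ (p - 1 - 1))) := by
          rw [← mul_assoc]
          exact mul_le_mul_left (hweak t ht) _
  have hlayer := lintegral_rpow_eq_lintegral_meas_lt_mul ν hg_nn hg hp1
  calc ∫⁻ x, M x ^ p ∂μ
      = ENNReal.ofReal p *
          ∫⁻ t in Ioi 0, μ {x | t < (M x).toReal} * ENNReal.ofReal (t ^ (p - 1)) := by
        rw [hM_eq, lintegral_rpow_eq_lintegral_meas_lt_mul μ
          (ae_of_all _ fun x => ENNReal.toReal_nonneg) hM.ennreal_toReal hp0]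
    _ ≤ ENNReal.ofReal p *
          ∫⁻ t in Ioi 0, C * (ν {x | t < g x} * ENNReal.ofReal (t ^ (p - 1 - 1))) := by
        refine mul_le_mul_right ?_ _
        exact setLIntegral_mono' measurableSet_Ioi htail
    _ = C * ENNReal.ofReal (p / (p - 1)) * ∫⁻ x, ENNReal.ofReal (g x ^ (p - 1)) ∂ν := by
        rw [lintegral_const_mul' _ _ hC, hlayer, mul_assoc C,
          ← mul_assoc (ENNReal.ofReal (p / (p - 1))),
          ← ENNReal.ofReal_mul (div_nonneg hp0.le hp1.le), div_mul_cancel₀ p hp1.ne',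
          mul_left_comm]

end WeakToStrong

section MaximalOn

variable {Ω : Set ℂ} {f w : ℂ → ℝ} {x c : ℂ} {r : ℝ}

theorem le_maximalOn (hr : 0 < r) (hx : x ∈ ball c r) (hΩ : ball c r ⊆ Ω) :
    (∫⁻ y in ball c r, ‖f y‖ₑ) / volume (ball c r) ≤ maximalOn Ω f x :=
  le_iSup_of_le c <| le_iSup_of_le r <| le_iSup_of_le hr <| le_iSup_of_le hx <|
    le_iSup_of_le hΩ le_rfl

theorem exists_ball_of_lt_maximalOn {t : ℝ≥0∞} (h : t < maximalOn Ω f x) :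
    ∃ c r, 0 < r ∧ x ∈ ball c r ∧ ball c r ⊆ Ω ∧
      t < (∫⁻ y in ball c r, ‖f y‖ₑ) / volume (ball c r) := by
  simp only [maximalOn, lt_iSup_iff, exists_prop] at h
  exact h

theorem lowerSemicontinuous_maximalOn : LowerSemicontinuous (maximalOn Ω f) :=
  lowerSemicontinuous_iff_isOpen_preimage.2 fun t => isOpen_iff_forall_mem_open.2 fun x hx => by
    obtain ⟨c, r, hr, hx, hΩ, ht⟩ := exists_ball_of_lt_maximalOn hx
    exact ⟨ball c r, fun y hy => ht.trans_le (le_maximalOn hr hy hΩ), isOpen_ball, hx⟩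

theorem measurable_maximalOn : Measurable (maximalOn Ω f) :=
  lowerSemicontinuous_maximalOn.measurable

theorem volume_ball_five_mul (c : ℂ) (r : ℝ) :
    volume (ball c (5 * r)) = 25 * volume (ball c r) := by
  rw [Measure.addHaar_ball_mul volume c (by norm_num : (0 : ℝ) ≤ 5) r,
    Measure.addHaar_ball_center, ← Measure.addHaar_ball_center volume c r,
    Complex.finrank_real_complex]
  norm_num

theorem withDensity_ball_five_mul_le_maximalOn_univ (hr : 0 < r) (hx : x ∈ ball c r) :
    volume.withDensity (fun y => ENNReal.ofReal (w y)) (ball c (5 * r)) ≤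
      25 * volume (ball c r) * maximalOn univ w x := by
  have hB : volume (ball c (5 * r)) ≠ 0 := (measure_ball_pos volume c (by linarith)).ne'
  calc volume.withDensity (fun y => ENNReal.ofReal (w y)) (ball c (5 * r))
      ≤ ∫⁻ y in ball c (5 * r), ‖w y‖ₑ := by
        rw [withDensity_apply _ measurableSet_ball]
        exact lintegral_mono fun y => Real.ofReal_le_enorm (w y)
    _ ≤ maximalOn univ w x * volume (ball c (5 * r)) :=
        (ENNReal.div_le_iff hB measure_ball_lt_top.ne).1 <|
          le_maximalOn (by linarith) (ball_subset_ball (by linarith) hx) (subset_univ _)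
    _ = 25 * volume (ball c r) * maximalOn univ w x := by rw [volume_ball_five_mul, mul_comm]

theorem mul_withDensity_ball_five_mul_le (hf : Measurable f) {s : ℝ≥0∞} (hr : 0 < r)
    (havg : s < (∫⁻ y in ball c r, ‖f y‖ₑ) / volume (ball c r)) :
    s * volume.withDensity (fun y => ENNReal.ofReal (w y)) (ball c (5 * r)) ≤
      50 * ∫⁻ y in ball c r ∩ {y | s < 2 * ‖f y‖ₑ}, ‖f y‖ₑ * maximalOn univ w y := by
  set m := volume.withDensity (fun y => ENNReal.ofReal (w y)) (ball c (5 * r))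
  set v := volume (ball c r)
  set E := ball c r ∩ {y | s < 2 * ‖f y‖ₑ}
  have hE : MeasurableSet E :=
    measurableSet_ball.inter (measurableSet_lt measurable_const (hf.enorm.const_mul 2))
  have hv0 : v ≠ 0 := (measure_ball_pos volume c hr).ne'
  have hv : v ≠ ⊤ := measure_ball_lt_top.ne
  have hJ : s / 2 * v ≤ ∫⁻ y in E, ‖f y‖ₑ :=
    half_mul_le_setLIntegral_inter_lt_two_mul hf.enorm havg.ne_top hv
      ((ENNReal.le_div_iff_mul_le (Or.inl hv0) (Or.inl hv)).1 havg.le)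
  have key : v * (s / 2 * m) ≤ v * (25 * ∫⁻ y in E, ‖f y‖ₑ * maximalOn univ w y) := calc
    v * (s / 2 * m) = s / 2 * v * m := by ring
    _ ≤ (∫⁻ y in E, ‖f y‖ₑ) * m := by gcongr
    _ = ∫⁻ y in E, ‖f y‖ₑ * m := (lintegral_mul_const _ hf.enorm).symm
    _ ≤ ∫⁻ y in E, v * (25 * (‖f y‖ₑ * maximalOn univ w y)) := by
        refine setLIntegral_mono' hE fun y hy => ?_
        calc ‖f y‖ₑ * m ≤ ‖f y‖ₑ * (25 * v * maximalOn univ w y) :=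
              mul_le_mul_right (withDensity_ball_five_mul_le_maximalOn_univ hr hy.1) _
          _ = v * (25 * (‖f y‖ₑ * maximalOn univ w y)) := by ring
    _ = v * (25 * ∫⁻ y in E, ‖f y‖ₑ * maximalOn univ w y) := by
        rw [lintegral_const_mul' _ _ hv, lintegral_const_mul' _ _ (by simp)]
  calc s * m = 2 * (s / 2 * m) := by
        rw [← mul_assoc, ENNReal.mul_div_cancel two_ne_zero (by simp)]
    _ ≤ 2 * (25 * ∫⁻ y in E, ‖f y‖ₑ * maximalOn univ w y) :=
        mul_le_mul_right ((ENNReal.mul_le_mul_iff_right hv0 hv).1 key) _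
    _ = 50 * ∫⁻ y in E, ‖f y‖ₑ * maximalOn univ w y := by rw [← mul_assoc]; norm_num

theorem mul_withDensity_lt_maximalOn_le (hf : Measurable f) (hw : LocallyIntegrable w)
    (s : ℝ≥0∞) :
    s * volume.withDensity (fun y => ENNReal.ofReal (w y)) {x | s < maximalOn Ω f x} ≤
      50 * ∫⁻ y in Ω ∩ {y | s < 2 * ‖f y‖ₑ}, ‖f y‖ₑ * maximalOn univ w y := by
  have := hw.isLocallyFiniteMeasure_withDensity_ofReal
  set μ := volume.withDensity fun y => ENNReal.ofReal (w y)
  set F := {y | s < 2 * ‖f y‖ₑ}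
  have hF : MeasurableSet F := measurableSet_lt measurable_const (hf.enorm.const_mul 2)
  have hE : IsOpen {x | s < maximalOn Ω f x} := lowerSemicontinuous_maximalOn.isOpen_preimage s
  rw [hE.measure_eq_iSup_isCompact]
  simp only [ENNReal.mul_iSup]
  refine iSup₂_le fun K hKE => iSup_le fun hK => ?_
  choose c r hr hxc hΩ havg using
    fun x : {x | s < maximalOn Ω f x} => exists_ball_of_lt_maximalOn x.2
  obtain ⟨t, hdisj, hcover⟩ := hK.exists_finset_pairwiseDisjoint_ball_subset_five_mul c r hr
    fun x hx => mem_iUnion.2 ⟨⟨x, hKE hx⟩, hxc _⟩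
  calc s * μ K ≤ s * ∑ i ∈ t, μ (ball (c i) (5 * r i)) :=
        mul_le_mul_right ((measure_mono hcover).trans (measure_biUnion_finset_le _ _)) _
    _ ≤ ∑ i ∈ t, 50 * ∫⁻ y in ball (c i) (r i) ∩ F, ‖f y‖ₑ * maximalOn univ w y := by
        rw [Finset.mul_sum]
        exact Finset.sum_le_sum fun i _ => mul_withDensity_ball_five_mul_le hf (hr i) (havg i)
    _ = 50 * ∫⁻ y in ⋃ i ∈ t, ball (c i) (r i) ∩ F, ‖f y‖ₑ * maximalOn univ w y := by
        rw [lintegral_biUnion_finset (hdisj.mono fun i => inter_subset_left)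
          (fun i _ => measurableSet_ball.inter hF), Finset.mul_sum]
    _ ≤ 50 * ∫⁻ y in Ω ∩ F, ‖f y‖ₑ * maximalOn univ w y :=
        mul_le_mul_right (lintegral_mono_set
          (iUnion₂_subset fun i _ => inter_subset_inter_left _ (hΩ i))) _

theorem ofReal_mul_restrict_lt_maximalOn_le (hf : Measurable f) (hw : LocallyIntegrable w)
    {t : ℝ} (ht : 0 < t) :
    ENNReal.ofReal t * (volume.withDensity fun x => ENNReal.ofReal (w x)).restrict Ω
        {x | ENNReal.ofReal t < maximalOn Ω f x} ≤
      50 * ((volume.restrict Ω).withDensity fun x => ‖f x‖ₑ * maximalOn univ w x)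
        {x | t < 2 * ‖f x‖} := by
  have hset : {x | ENNReal.ofReal t < 2 * ‖f x‖ₑ} = {x | t < 2 * ‖f x‖} := by
    ext x
    rw [mem_ofPred_eq, mem_ofPred_eq, ← ofReal_norm, ← ENNReal.ofReal_ofNat 2,
      ← ENNReal.ofReal_mul zero_le_two, ENNReal.ofReal_lt_ofReal_iff']
    exact and_iff_left_of_imp ht.trans
  have hmeas : MeasurableSet {x | t < 2 * ‖f x‖} :=
    measurableSet_lt measurable_const (hf.norm.const_mul 2)
  calc _ ≤ ENNReal.ofReal t * (volume.withDensity fun x => ENNReal.ofReal (w x))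
        {x | ENNReal.ofReal t < maximalOn Ω f x} :=
          mul_le_mul_right (Measure.restrict_apply_le _ _) _
    _ ≤ _ := mul_withDensity_lt_maximalOn_le hf hw _
    _ = _ := by rw [hset, withDensity_apply _ hmeas, Measure.restrict_restrict hmeas, inter_comm]

end MaximalOn

/-- **A local Fefferman–Stein weighted maximal inequality.**
For an open set `Ω ⊆ ℝ²`, `1 < p < ∞`, a nonnegative locally integrable weight `w` and a
measurable `f`, `∫_Ω (M_Ω f)^p w ≤ C(p) ∫_Ω |f|^p Mw`, where `M_Ω` is the local
Hardy–Littlewood maximal operator on `Ω` and `M` the global one. -/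
theorem local_fefferman_stein (p : ℝ) (hp : 1 < p) :
    ∃ C : ℝ, 0 < C ∧
    ∀ (Ω : Set ℂ) (f w : ℂ → ℝ),
      IsOpen Ω → Measurable f →
      (∀ x, 0 ≤ w x) → LocallyIntegrable w volume →
      (∫⁻ x in Ω, maximalOn Ω f x ^ p * ENNReal.ofReal (w x)) ≤
        ENNReal.ofReal C *
          ∫⁻ x in Ω, (‖f x‖₊ : ℝ≥0∞) ^ p * maximalOn Set.univ w x := by
  have hp1 : 0 < p - 1 := by linarith
  refine ⟨50 * (p / (p - 1)) * 2 ^ (p - 1), by positivity, fun Ω f w hΩ hf _ hw => ?_⟩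
  set A := ∫⁻ x in Ω, (‖f x‖₊ : ℝ≥0∞) ^ p * maximalOn univ w x
  set ν := (volume.restrict Ω).withDensity fun x => ‖f x‖ₑ * maximalOn univ w x
  have hg : AEMeasurable (fun x => 2 * ‖f x‖) ν := (hf.norm.const_mul 2).aemeasurable
  have hI :
      ∫⁻ x, ENNReal.ofReal ((2 * ‖f x‖) ^ (p - 1)) ∂ν = ENNReal.ofReal (2 ^ (p - 1)) * A :=
    lintegral_ofReal_two_mul_norm_rpow_withDensity hf measurable_maximalOn (by linarith)
  obtain hA | hA := eq_or_ne A ⊤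
  · rw [hA, ENNReal.mul_top (ENNReal.ofReal_pos.2 (by positivity)).ne']
    exact le_top
  have hweak := fun t (ht : 0 < t) => ofReal_mul_restrict_lt_maximalOn_le (Ω := Ω) hf hw ht
  calc ∫⁻ x in Ω, maximalOn Ω f x ^ p * ENNReal.ofReal (w x)
      = ∫⁻ x, maximalOn Ω f x ^ p
          ∂(volume.withDensity fun x => ENNReal.ofReal (w x)).restrict Ω := by
        rw [setLIntegral_withDensity_eq_setLIntegral_mul_non_measurable₀ volume
          hw.aestronglyMeasurable.aemeasurable.ennreal_ofReal.restrict _ hΩ.measurableSet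
          (ae_of_all _ fun _ => ENNReal.ofReal_lt_top)]
        exact lintegral_congr fun x => mul_comm _ _
    _ ≤ 50 * ENNReal.ofReal (p / (p - 1)) *
          ∫⁻ x, ENNReal.ofReal ((2 * ‖f x‖) ^ (p - 1)) ∂ν :=
        lintegral_rpow_le_of_mul_meas_lt_le hp measurable_maximalOn.aemeasurable
          (ae_lt_top_of_mul_meas_lt_le hp hg (by simp) hweak
            (hI ▸ ENNReal.mul_ne_top ENNReal.ofReal_ne_top hA))
          (ae_of_all _ fun x => by positivity) hg (by simp) hweak
    _ = _ := by
        rw [hI, ENNReal.ofReal_mul (by positivity), ENNReal.ofReal_mul (by norm_num),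
          ← mul_assoc, ENNReal.ofReal_ofNat]
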